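/- The binary image under the Gray map of the Plotkin construction on ℤ₂ℤ₄-additive codes X, Y ⊆ ℤ₂^α × ℤ₄^β is a (not necessarily linear) binary code of length 2α+4β with 2^(γ_X+γ_Y)·4^(δ_X+δ_Y) codewords and minimum Hamming distance min{2d_X, d_Y}, where d_X, d_Y are the minimum Lee distances of X and Y. -/

import Mathlib

open Finset

/-- The Gray map `φ : ℤ₄ → ℤ₂²`. -/
def grayMap (x : ZMod 4) : ZMod 2 × ZMod 2 :=
  if x = 0 then (0, 0) else if x = 1 then (0, 1) else if x = 2 then (1, 1) else (1, 0)

/-- Lee weight on `ℤ₄`: `wL(0)=0, wL(1)=1, wL(2)=2, wL(3)=1`. -/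
def leeWt4 (x : ZMod 4) : ℕ := min x.val (4 - x.val)

/-- Hamming distance on `ℤ₂²`. -/
def hamDist2 (x y : ZMod 2 × ZMod 2) : ℕ :=
  (if x.1 = y.1 then 0 else 1) + (if x.2 = y.2 then 0 else 1)

/-- The ambient space `ℤ₂^a × ℤ₄^b`. -/
abbrev Vec (a b : ℕ) := (Fin a → ZMod 2) × (Fin b → ZMod 4)

/-- Hamming weight of a binary vector. -/
def wtH {n : ℕ} (f : Fin n → ZMod 2) : ℕ := (univ.filter fun i => f i ≠ 0).card

/-- Lee weight on `ℤ₂^a × ℤ₄^b`. -/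
def leeWt {a b : ℕ} (w : Vec a b) : ℕ := wtH w.1 + ∑ j, leeWt4 (w.2 j)

/-- Lee distance on `ℤ₂^a × ℤ₄^b`. -/
def leeDist {a b : ℕ} (x y : Vec a b) : ℕ := leeWt (x - y)

/-- Minimum Lee distance (= minimum Lee weight of a nonzero element) of a set. -/
noncomputable def minLee {a b : ℕ} (S : Set (Vec a b)) : ℕ := sInf (leeWt '' (S \ {0}))

/-- Minimum Hamming distance of a (not necessarily linear) binary code. -/
noncomputable def minHam {n : ℕ} (S : Set (Fin n → ZMod 2)) : ℕ :=
  sInf {d | ∃ x ∈ S, ∃ y ∈ S, x ≠ y ∧ hammingDist x y = d}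

/-- The extended Gray map `Φ : ℤ₂^a × ℤ₄^b → ℤ₂^(a+2b)`. -/
def Phi {a b : ℕ} (x : Vec a b) : Fin (a + 2 * b) → ZMod 2 :=
  fun i =>
    if h : (i : ℕ) < a then x.1 ⟨i, h⟩
    else
      have hb : ((i : ℕ) - a) / 2 < b := by have := i.isLt; omega
      if ((i : ℕ) - a) % 2 = 0 then (grayMap (x.2 ⟨((i : ℕ) - a) / 2, hb⟩)).1
      else (grayMap (x.2 ⟨((i : ℕ) - a) / 2, hb⟩)).2

/-- The Plotkin vector `(u , u + v)` in `ℤ₂^(2a) × ℤ₄^(2b)`. -/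
def plVec {a b : ℕ} (u v : Vec a b) : Vec (a + a) (b + b) :=
  (Fin.append u.1 (u.1 + v.1), Fin.append u.2 (u.2 + v.2))

/-- The Plotkin construction `{(u, u+v) : u ∈ X, v ∈ Y}`. -/
def plotkinSet {a b : ℕ} (X Y : Set (Vec a b)) : Set (Vec (a + a) (b + b)) :=
  {w | ∃ u ∈ X, ∃ v ∈ Y, w = plVec u v}

/-!
The Gray map turns Lee distance into Hamming distance: `φ(c)` and `φ(d)` differ in exactly
`wL(c - d)` bits. Hence `Φ` is injective, and the minimum distance of the Gray image of an additive
code is its minimum Lee weight. The Plotkin map `(u, v) ↦ (u, u + v)` is an injective additive map,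
so `C` has `|X| |Y|` codewords, and the codeword of `(u, v)` has Lee weight `wL(u) + wL(u + v)`.
This is `2 wL(u) ≥ 2 d_X` when `v = 0` and at least `wL(v) ≥ d_Y` otherwise; both bounds are
attained, by `(u, u)` and `(0, v)` for minimum-weight `u ∈ X` and `v ∈ Y`.
-/

lemma hamDist2_grayMap (c d : ZMod 4) :
    hamDist2 (grayMap c) (grayMap d) = leeWt4 (c - d) := by
  revert c d; decide

lemma leeWt4_eq_zero_iff (c : ZMod 4) : leeWt4 c = 0 ↔ c = 0 := by
  revert c; decide

lemma leeWt4_neg (c : ZMod 4) : leeWt4 (-c) = leeWt4 c := by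
  revert c; decide

lemma leeWt4_add_le (c d : ZMod 4) : leeWt4 (c + d) ≤ leeWt4 c + leeWt4 d := by
  revert c d; decide

lemma hammingNorm_neg {ι G : Type*} [Fintype ι] [AddGroup G] [DecidableEq G] (x : ι → G) :
    hammingNorm (-x) = hammingNorm x :=
  hammingNorm_comp (fun _ => Neg.neg) (fun _ => neg_injective) (fun _ => neg_zero)

lemma hammingNorm_add_le {ι G : Type*} [Fintype ι] [AddGroup G] [DecidableEq G] (x y : ι → G) :
    hammingNorm (x + y) ≤ hammingNorm x + hammingNorm y := by
  calc hammingNorm (x + y) = hammingDist (-x) y := by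
        rw [hammingDist_eq_hammingNorm, neg_neg]
    _ ≤ hammingDist (-x) 0 + hammingDist 0 y := hammingDist_triangle _ _ _
    _ = hammingNorm x + hammingNorm y := by
        rw [hammingDist_zero_right, hammingDist_zero_left, hammingNorm_neg]

lemma wtH_eq_hammingNorm {n : ℕ} (f : Fin n → ZMod 2) : wtH f = hammingNorm f := rfl

lemma wtH_append {m n : ℕ} (f : Fin m → ZMod 2) (g : Fin n → ZMod 2) :
    wtH (Fin.append f g) = wtH f + wtH g := by
  simp only [wtH_eq_hammingNorm, hammingNorm, Finset.card_filter, Fin.sum_univ_add,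
    Fin.append_left, Fin.append_right]

section LeeWeight

variable {a b : ℕ}

lemma leeWt_eq_zero_iff {w : Vec a b} : leeWt w = 0 ↔ w = 0 := by
  simp [leeWt, wtH_eq_hammingNorm, Finset.sum_eq_zero_iff, leeWt4_eq_zero_iff, Prod.ext_iff,
    funext_iff]

lemma leeWt_neg (w : Vec a b) : leeWt (-w) = leeWt w := by
  simp [leeWt, wtH_eq_hammingNorm, leeWt4_neg, hammingNorm_neg]

lemma leeWt_add_le (x y : Vec a b) : leeWt (x + y) ≤ leeWt x + leeWt y := by
  have h₁ : wtH (x.1 + y.1) ≤ wtH x.1 + wtH y.1 := hammingNorm_add_le x.1 y.1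
  have h₂ : ∑ j, leeWt4 (x.2 j + y.2 j) ≤ ∑ j, leeWt4 (x.2 j) + ∑ j, leeWt4 (y.2 j) := by
    rw [← Finset.sum_add_distrib]
    exact Finset.sum_le_sum fun j _ => leeWt4_add_le _ _
  simp only [leeWt, Prod.fst_add, Prod.snd_add, Pi.add_apply]
  omega

lemma leeWt_sub_le (x y : Vec a b) : leeWt (x - y) ≤ leeWt x + leeWt y := by
  simpa [sub_eq_add_neg, leeWt_neg] using leeWt_add_le x (-y)

end LeeWeight

section GrayMap

variable {a b : ℕ}

/-- `(j, r) ↦ 2 j + r`: the position of the `r`-th bit of the Gray image of the `j`-th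
quaternary coordinate. -/
def grayIndex (b : ℕ) : Fin b × Fin 2 ≃ Fin (2 * b) :=
  finProdFinEquiv.trans (finCongr (Nat.mul_comm b 2))

lemma Phi_castAdd (x : Vec a b) (i : Fin a) : Phi x (Fin.castAdd (2 * b) i) = x.1 i := by
  simp [Phi]

lemma Phi_natAdd (x : Vec a b) (k : Fin (2 * b)) :
    Phi x (Fin.natAdd a k) =
      if (k : ℕ) % 2 = 0 then (grayMap (x.2 ⟨k / 2, by omega⟩)).1
      else (grayMap (x.2 ⟨k / 2, by omega⟩)).2 := by
  simp [Phi]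

lemma Phi_natAdd_grayIndex (x : Vec a b) (j : Fin b) (r : Fin 2) :
    Phi x (Fin.natAdd a (grayIndex b (j, r))) =
      if r = 0 then (grayMap (x.2 j)).1 else (grayMap (x.2 j)).2 := by
  have hidx : ((grayIndex b (j, r) : Fin (2 * b)) : ℕ) = r + 2 * j := by
    simp [grayIndex, finProdFinEquiv_apply_val]
  have hj : (⟨(grayIndex b (j, r) : ℕ) / 2, by omega⟩ : Fin b) = j :=
    Fin.ext (by simp only [hidx]; omega)
  have hr : (grayIndex b (j, r) : ℕ) % 2 = 0 ↔ r = 0 := by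
    rw [hidx, Fin.ext_iff]; omega
  simp only [Phi_natAdd, hj, hr]

lemma hammingDist_Phi (x y : Vec a b) : hammingDist (Phi x) (Phi y) = leeWt (x - y) := by
  have hbin : ∑ i : Fin a, (if Phi x (Fin.castAdd (2 * b) i) ≠ Phi y (Fin.castAdd (2 * b) i)
      then 1 else 0) = wtH (x - y).1 := by
    simp only [wtH_eq_hammingNorm, hammingNorm, Finset.card_filter, Phi_castAdd, Prod.fst_sub,
      Pi.sub_apply, ne_eq, sub_eq_zero]
  have hquat : ∑ k : Fin (2 * b), (if Phi x (Fin.natAdd a k) ≠ Phi y (Fin.natAdd a k)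
      then 1 else 0) = ∑ j, leeWt4 ((x - y).2 j) := by
    rw [← (grayIndex b).sum_comp, Fintype.sum_prod_type]
    refine Finset.sum_congr rfl fun j _ => ?_
    simp only [Fin.sum_univ_two, Phi_natAdd_grayIndex, Prod.snd_sub, Pi.sub_apply,
      ← hamDist2_grayMap, hamDist2, ite_not, ↓reduceIte, one_ne_zero]
  rw [hammingDist, Finset.card_filter, Fin.sum_univ_add, hbin, hquat, leeWt]

lemma Phi_injective : Function.Injective (Phi : Vec a b → _) := fun x y h => by
  rwa [← sub_eq_zero, ← leeWt_eq_zero_iff, ← hammingDist_Phi, hammingDist_eq_zero]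

end GrayMap

section Plotkin

variable {a b : ℕ}

lemma leeWt_plVec (u v : Vec a b) : leeWt (plVec u v) = leeWt u + leeWt (u + v) := by
  simp only [leeWt, plVec, wtH_append, Fin.sum_univ_add, Fin.append_left, Fin.append_right,
    Prod.fst_add, Prod.snd_add, Pi.add_apply]
  ring

lemma plVec_eq_zero_iff {u v : Vec a b} : plVec u v = 0 ↔ u = 0 ∧ v = 0 := by
  rw [← leeWt_eq_zero_iff, leeWt_plVec, Nat.add_eq_zero_iff, leeWt_eq_zero_iff,
    leeWt_eq_zero_iff]
  constructor
  · rintro ⟨rfl, h⟩; exact ⟨rfl, by simpa using h⟩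
  · rintro ⟨rfl, rfl⟩; simp

def plotkinHom (a b : ℕ) : Vec a b × Vec a b →+ Vec (a + a) (b + b) where
  toFun p := plVec p.1 p.2
  map_zero' := plVec_eq_zero_iff.2 ⟨rfl, rfl⟩
  map_add' p q := by
    ext i <;> refine Fin.addCases (fun i => ?_) (fun i => ?_) i <;>
      simp only [plVec, Prod.fst_add, Prod.snd_add, Pi.add_apply, Fin.append_left,
        Fin.append_right] <;> abel

lemma plotkinHom_injective : Function.Injective (plotkinHom a b) :=
  (injective_iff_map_eq_zero _).2 fun _ hp => Prod.ext_iff.2 (plVec_eq_zero_iff.1 hp)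

lemma coe_map_plotkinHom (X Y : AddSubgroup (Vec a b)) :
    ((X.prod Y).map (plotkinHom a b) : Set (Vec (a + a) (b + b))) = plotkinSet X Y := by
  ext w
  rw [AddSubgroup.coe_map, AddSubgroup.coe_prod]
  constructor
  · rintro ⟨⟨u, v⟩, ⟨hu, hv⟩, rfl⟩; exact ⟨u, hu, v, hv, rfl⟩
  · rintro ⟨u, hu, v, hv, rfl⟩; exact ⟨(u, v), ⟨hu, hv⟩, rfl⟩

end Plotkin

section MinimumDistance

variable {a b : ℕ}

lemma minLee_le {S : Set (Vec a b)} {w : Vec a b} (hw : w ∈ S) (hw0 : w ≠ 0) :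
    minLee S ≤ leeWt w :=
  Nat.sInf_le ⟨w, ⟨hw, hw0⟩, rfl⟩

lemma le_minLee {S : Set (Vec a b)} {d : ℕ} (hS : ∃ w ∈ S, w ≠ 0)
    (h : ∀ w ∈ S, w ≠ 0 → d ≤ leeWt w) : d ≤ minLee S := by
  obtain ⟨w, hw, hw0⟩ := hS
  refine le_csInf ⟨leeWt w, w, ⟨hw, hw0⟩, rfl⟩ ?_
  rintro _ ⟨v, ⟨hv, hv0⟩, rfl⟩
  exact h v hv hv0

lemma exists_leeWt_eq_minLee {S : Set (Vec a b)} (hS : ∃ w ∈ S, w ≠ 0) :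
    ∃ w ∈ S, w ≠ 0 ∧ leeWt w = minLee S := by
  obtain ⟨w, hw, hw0⟩ := hS
  have hmem : minLee S ∈ leeWt '' (S \ {0}) := Nat.sInf_mem ⟨leeWt w, w, ⟨hw, hw0⟩, rfl⟩
  obtain ⟨v, ⟨hv, hv0⟩, hvw⟩ := hmem
  exact ⟨v, hv, hv0, hvw⟩

theorem minLee_plotkinSet {X Y : AddSubgroup (Vec a b)} (hX : X ≠ ⊥) (hY : Y ≠ ⊥) :
    minLee (plotkinSet (X : Set (Vec a b)) Y) =
      min (2 * minLee (X : Set (Vec a b))) (minLee (Y : Set (Vec a b))) := by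
  obtain ⟨u₀, hu₀, hu₀0, hu₀wt⟩ := exists_leeWt_eq_minLee (X.bot_or_exists_ne_zero.resolve_left hX)
  obtain ⟨v₀, hv₀, hv₀0, hv₀wt⟩ := exists_leeWt_eq_minLee (Y.bot_or_exists_ne_zero.resolve_left hY)
  have hu₀mem : plVec u₀ 0 ∈ plotkinSet (X : Set (Vec a b)) Y := ⟨u₀, hu₀, 0, Y.zero_mem, rfl⟩
  have hv₀mem : plVec 0 v₀ ∈ plotkinSet (X : Set (Vec a b)) Y := ⟨0, X.zero_mem, v₀, hv₀, rfl⟩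
  have hu₀ne : plVec u₀ 0 ≠ 0 := fun h => hu₀0 (plVec_eq_zero_iff.1 h).1
  have hv₀ne : plVec 0 v₀ ≠ 0 := fun h => hv₀0 (plVec_eq_zero_iff.1 h).2
  apply le_antisymm
  · refine le_min ?_ ?_
    · calc _ ≤ leeWt (plVec u₀ 0) := minLee_le hu₀mem hu₀ne
        _ = _ := by rw [leeWt_plVec, add_zero, hu₀wt, two_mul]
    · calc _ ≤ leeWt (plVec 0 v₀) := minLee_le hv₀mem hv₀ne
        _ = _ := by rw [leeWt_plVec, zero_add, hv₀wt, leeWt_eq_zero_iff.2 rfl, zero_add]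
  · refine le_minLee ⟨_, hu₀mem, hu₀ne⟩ ?_
    rintro _ ⟨u, hu, v, hv, rfl⟩ hw0
    rw [leeWt_plVec]
    rcases eq_or_ne v 0 with rfl | hv0
    · have := minLee_le hu fun h => hw0 (plVec_eq_zero_iff.2 ⟨h, rfl⟩)
      rw [add_zero]
      omega
    · have := minLee_le hv hv0
      have := leeWt_sub_le (u + v) u
      rw [add_sub_cancel_left] at this
      omega

end MinimumDistance

section GrayImage

variable {a b : ℕ}

theorem minHam_image_Phi (C : AddSubgroup (Vec a b)) :
    minHam (Phi '' (C : Set (Vec a b))) = minLee (C : Set (Vec a b)) := by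
  unfold minHam minLee
  congr 1
  ext d
  constructor
  · rintro ⟨_, ⟨x, hx, rfl⟩, _, ⟨y, hy, rfl⟩, hne, rfl⟩
    exact ⟨x - y, ⟨C.sub_mem hx hy, sub_ne_zero.2 fun h => hne (h ▸ rfl)⟩,
      (hammingDist_Phi x y).symm⟩
  · rintro ⟨w, ⟨hw, hw0⟩, rfl⟩
    exact ⟨Phi w, ⟨w, hw, rfl⟩, Phi 0, ⟨0, C.zero_mem, rfl⟩, Phi_injective.ne hw0,
      by rw [hammingDist_Phi, sub_zero]⟩

lemma card_vec (a b : ℕ) : Nat.card (Vec a b) = 2 ^ a * 4 ^ b := by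
  simp [Nat.card_eq_fintype_card]

theorem card_image_Phi_plotkinSet (X Y : AddSubgroup (Vec a b)) :
    Nat.card (Phi '' plotkinSet (X : Set (Vec a b)) Y) = Nat.card X * Nat.card Y := by
  rw [Nat.card_image_of_injective Phi_injective, ← coe_map_plotkinHom, SetLike.coe_sort_coe,
    AddSubgroup.card_map_of_injective plotkinHom_injective,
    Nat.card_congr (X.prodEquiv Y).toEquiv, Nat.card_prod]

end GrayImage

/-- the Gray image of the Plotkin construction on codes `X` of type
`(α,β;γX,δX)` and `Y` of type `(α,β;γY,δY)` (both nonzero, with minimum Lee distances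
`dX, dY`) is a binary code of length `2α+4β` with `2^(γX+γY)·4^(δX+δY)` codewords and
minimum Hamming distance `min {2dX, dY}`. -/
theorem gray_image_plotkin (α β γX δX γY δY dX dY : ℕ) (X Y : AddSubgroup (Vec α β))
    (hX : Nonempty (X ≃+ Vec γX δX)) (hY : Nonempty (Y ≃+ Vec γY δY))
    (hXne : X ≠ ⊥) (hYne : Y ≠ ⊥)
    (hdX : minLee (X : Set (Vec α β)) = dX) (hdY : minLee (Y : Set (Vec α β)) = dY) :
    Nat.card (Phi '' plotkinSet (X : Set (Vec α β)) (Y : Set (Vec α β)) :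
        Set (Fin ((α + α) + 2 * (β + β)) → ZMod 2)) = 2 ^ (γX + γY) * 4 ^ (δX + δY) ∧
      minHam (Phi '' plotkinSet (X : Set (Vec α β)) (Y : Set (Vec α β))) = min (2 * dX) dY := by
  obtain ⟨eX⟩ := hX
  obtain ⟨eY⟩ := hY
  subst hdX hdY
  constructor
  · rw [card_image_Phi_plotkinSet, Nat.card_congr eX.toEquiv, Nat.card_congr eY.toEquiv,
      card_vec, card_vec]
    ring
  · rw [← coe_map_plotkinHom, minHam_image_Phi, coe_map_plotkinHom, minLee_plotkinSet hXne hYne]
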